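/- arXiv:1410.1603 — 2 statements merged into one kernel-verified Lean document; each statement's English description precedes it below -/
import Mathlib

section
/- There is an absolute constant c₀ > 0 such that for every real r ≥ 4 and every prime p: if p ≤ r^{2/3} then |log h_p(r) − r·log p/(p+1)| ≤ c₀ and |log h_p(−r) − r·log p/(p−1)| ≤ c₀; while if p > r^{2/3} then |log h_p(r) − log cosh(r·log p/(p+1))| ≤ c₀·r·(log p)/p² and |log h_p(−r) − log cosh(r·log p/(p−1))| ≤ c₀·r·(log p)/p². -/
open scoped Classical
open MeasureTheory ProbabilityTheory Complex

noncomputable section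

/-- A fundamental discriminant: `D ≠ 1` with either `D ≡ 1 (mod 4)` squarefree, or `D = 4m`
with `m` squarefree and `m ≡ 2, 3 (mod 4)`. -/
def IsFundamentalDiscriminant (D : ℤ) : Prop :=
  D ≠ 1 ∧ ((D % 4 = 1 ∧ Squarefree D) ∨
    ∃ m : ℤ, D = 4 * m ∧ Squarefree m ∧ (m % 4 = 2 ∨ m % 4 = 3))

/-- The Kronecker symbol `(D/2)`. -/
def kronAtTwo (D : ℤ) : ℤ :=
  if D % 2 = 0 then 0 else if D % 8 = 1 ∨ D % 8 = 7 then 1 else -1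

/-- The Kronecker symbol `χ_D(n) = (D/n)` for `n ≥ 1`, via
`(D/n) = (D/2)^{v₂(n)} · (D / oddpart(n))`, the latter a Jacobi symbol. -/
def kroneckerChar (D : ℤ) (n : ℕ) : ℤ :=
  if n = 0 then 0 else kronAtTwo D ^ (n.factorization 2) * jacobiSym D (ordCompl[2] n)

/-- `F(x)`: the finite set of fundamental discriminants `D` with `|D| ≤ x`. -/
def FD (x : ℝ) : Finset ℤ :=
  (Finset.Icc (-(⌊x⌋)) ⌊x⌋).filter IsFundamentalDiscriminant

/-- `L` is the (entire) analytic continuation of the Dirichlet series `∑ χ_D(n) n^{-s}`,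
i.e. the Dirichlet L-function `L(s, χ_D)` of the quadratic character `χ_D`. -/
def IsLFunctionOf (D : ℤ) (L : ℂ → ℂ) : Prop :=
  (∀ s : ℂ, DifferentiableAt ℂ L s) ∧
  ∀ s : ℂ, 1 < s.re → HasSum (fun n : ℕ => (kroneckerChar D n : ℂ) / (n : ℂ) ^ s) (L s)

/-- The Euler-Kronecker constant `γ_D = γ + L'(1,χ_D)/L(1,χ_D)` (a real number). -/
def EKconst (L : ℂ → ℂ) : ℝ :=
  Real.eulerMascheroniConstant + (deriv L 1 / L 1).re

/-- The random model: `(X(p))_p` independent with the prescribed distribution,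
extended multiplicatively to all positive integers. -/
def IsRandomModel {Ω : Type} [MeasurableSpace Ω] (μ : Measure Ω) (X : ℕ → Ω → ℝ) : Prop :=
  IsProbabilityMeasure μ ∧
  (∀ n, Measurable (X n)) ∧
  (∀ p : ℕ, p.Prime →
    μ {ω | X p ω = 1} = ENNReal.ofReal ((p : ℝ) / (2 * (p + 1))) ∧
    μ {ω | X p ω = -1} = ENNReal.ofReal ((p : ℝ) / (2 * (p + 1))) ∧
    μ {ω | X p ω = 0} = ENNReal.ofReal (1 / ((p : ℝ) + 1))) ∧
  iIndepFun (fun p : Nat.Primes => X (p : ℕ)) μ ∧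
  ∀ n : ℕ, n ≠ 0 → ∀ ω, X n ω = ∏ p ∈ n.primeFactors, X p ω ^ n.factorization p

/-- The random Euler-Kronecker constant `γ_rand = γ - ∑_{n≥1} Λ(n) X(n)/n`. -/
def gammaRand {Ω : Type} (X : ℕ → Ω → ℝ) (ω : Ω) : ℝ :=
  Real.eulerMascheroniConstant - ∑' n : ℕ, ArithmeticFunction.vonMangoldt n * X n ω / n

/-- The constant `A₀ = ∫₀¹ tanh(t)/t dt + ∫₁^∞ (tanh(t)-1)/t dt`. -/
def A0 : ℝ :=
  (∫ t in (0:ℝ)..1, Real.tanh t / t) + ∫ t in Set.Ioi (1:ℝ), (Real.tanh t - 1) / t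

/-- `A₁ = A₀ + 2ζ'(2)/ζ(2)`. -/
def A1 : ℝ := A0 + (2 * deriv riemannZeta 2 / riemannZeta 2).re

/-- `A₂ = A₀ - 2γ`. -/
def A2 : ℝ := A0 - 2 * Real.eulerMascheroniConstant

/-- `h_p(s) = E[exp(-s (log p) X(p)/(p - X(p)))]`. -/
def hp (p : ℕ) (s : ℝ) : ℝ :=
  (p : ℝ) / (2 * ((p : ℝ) + 1)) * Real.exp (s * Real.log p / ((p : ℝ) + 1)) +
    (p : ℝ) / (2 * ((p : ℝ) + 1)) * Real.exp (-s * Real.log p / ((p : ℝ) - 1)) +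
    1 / ((p : ℝ) + 1)

/-- `M(s) = γ s + ∑_p log h_p(s)`, which for real `s` is `log E[exp(s γ_rand)]`. -/
def Mfun (s : ℝ) : ℝ :=
  Real.eulerMascheroniConstant * s + ∑' p : Nat.Primes, Real.log (hp (p : ℕ) s)

/-- `Λ_k`, the `k`-fold Dirichlet convolution of the von Mangoldt function. -/
def LambdaK (k : ℕ) (n : ℕ) : ℝ := (ArithmeticFunction.vonMangoldt ^ k) n

/-- The Laplace transform `Λ̂(s) = E[exp(s γ_rand)]` at a complex argument. -/
def laplaceC {Ω : Type} [MeasurableSpace Ω] (μ : Measure Ω) (X : ℕ → Ω → ℝ) (s : ℂ) : ℂ :=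
  ∫ ω, Complex.exp (s * (gammaRand X ω : ℂ)) ∂μ

end

/-!
Write `a = p/(2(p+1))`, `b = 1/(p+1)`, `t = r log p/(p+1)` and `t' = r log p/(p-1)`. Then
`h_p(r) = a e^t + a e^{-t'} + b` and `h_p(-r) = a e^{t'} + a e^{-t} + b`, where `a ≥ 1/3` and
`2a + b = 1`, so each lies between a third of its dominant term `e^t` (resp. `e^{t'}`) and that
term: this is the `O(1)` estimate. For the `cosh` estimate,
`h_p(r) - cosh t = a (e^{-t'} - e^{-t}) - b (cosh t - 1)` is at most `(|t' - t| + b t) cosh t`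
in absolute value, and both `t' - t` and `b t'` are `O(r log p / p²)`.
-/

lemma exp_neg_sub_exp_neg_le {u : ℝ} (hu : 0 ≤ u) (v : ℝ) :
    Real.exp (-u) - Real.exp (-v) ≤ |u - v| := by
  rcases le_total u v with huv | hvu
  · have hexp_u : Real.exp (-u) ≤ 1 := Real.exp_le_one_iff.2 (by linarith)
    have hexp_vu : Real.exp (-v) = Real.exp (-u) * Real.exp (u - v) := by
      rw [← Real.exp_add]; ring_nf
    have htangent : u - v + 1 ≤ Real.exp (u - v) := Real.add_one_le_exp _
    rw [abs_of_nonpos (by linarith), hexp_vu]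
    nlinarith [Real.exp_pos (-u)]
  · linarith [Real.exp_le_exp.2 (neg_le_neg hvu), abs_nonneg (u - v)]

lemma abs_exp_neg_sub_exp_neg_le {u v : ℝ} (hu : 0 ≤ u) (hv : 0 ≤ v) :
    |Real.exp (-u) - Real.exp (-v)| ≤ |u - v| := by
  refine abs_sub_le_iff.2 ⟨exp_neg_sub_exp_neg_le hu v, ?_⟩
  rw [abs_sub_comm]
  exact exp_neg_sub_exp_neg_le hv u

lemma cosh_le_exp_of_nonneg {v : ℝ} (hv : 0 ≤ v) : Real.cosh v ≤ Real.exp v := by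
  rw [Real.cosh_eq]
  linarith [Real.exp_le_exp.2 (show -v ≤ v by linarith)]

lemma cosh_sub_one_le_mul_cosh {v : ℝ} (hv : 0 ≤ v) : Real.cosh v - 1 ≤ v * Real.cosh v := by
  have hexp_cosh : Real.exp (-v) * Real.cosh v ≤ 1 := by
    calc Real.exp (-v) * Real.cosh v ≤ Real.exp (-v) * Real.exp v :=
          mul_le_mul_of_nonneg_left (cosh_le_exp_of_nonneg hv) (Real.exp_pos _).le
      _ = 1 := by rw [← Real.exp_add, neg_add_cancel, Real.exp_zero]
  have htangent : -v + 1 ≤ Real.exp (-v) := Real.add_one_le_exp _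
  nlinarith [Real.one_le_cosh v]

lemma log_sub_log_le {x y : ℝ} (hx : 0 < x) (hy : 0 < y) :
    Real.log x - Real.log y ≤ (x - y) / y := by
  rw [← Real.log_div hx.ne' hy.ne', sub_div, div_self hy.ne']
  exact Real.log_le_sub_one_of_pos (div_pos hx hy)

lemma abs_log_sub_log_le {x y : ℝ} (hx : 0 < x) (hy : 0 < y) :
    |Real.log x - Real.log y| ≤ |x - y| / min x y := by
  have hmin : 0 < min x y := lt_min hx hy
  refine abs_sub_le_iff.2 ⟨?_, ?_⟩
  · calc Real.log x - Real.log y ≤ (x - y) / y := log_sub_log_le hx hy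
      _ ≤ |x - y| / min x y :=
          div_le_div₀ (abs_nonneg _) (le_abs_self _) hmin (min_le_right _ _)
  · calc Real.log y - Real.log x ≤ (y - x) / x := log_sub_log_le hy hx
      _ ≤ |x - y| / min x y := by
          rw [abs_sub_comm]
          exact div_le_div₀ (abs_nonneg _) (le_abs_self _) hmin (min_le_left _ _)

section WeightedExp

variable {a b : ℝ} (ha : 1 / 3 ≤ a) (hb : 0 ≤ b) (hab : 2 * a + b = 1)
include ha hb hab

lemma abs_log_weighted_exp_sub_le_log_three {t u : ℝ} (ht : 0 ≤ t) (hu : 0 ≤ u) :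
    |Real.log (a * Real.exp t + a * Real.exp (-u) + b) - t| ≤ Real.log 3 := by
  have hexp_t : 1 ≤ Real.exp t := Real.one_le_exp ht
  have hexp_u : Real.exp (-u) ≤ 1 := Real.exp_le_one_iff.2 (by linarith)
  have hlower : Real.exp t / 3 ≤ a * Real.exp t + a * Real.exp (-u) + b := by
    nlinarith [Real.exp_pos (-u)]
  have hupper : a * Real.exp t + a * Real.exp (-u) + b ≤ Real.exp t := by nlinarith
  have hpos : 0 < Real.exp t / 3 := by positivity
  refine abs_sub_le_iff.2 ⟨?_, ?_⟩
  · linarith [Real.log_le_log (hpos.trans_le hlower) hupper, Real.log_exp t,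
      Real.log_nonneg (by norm_num : (1 : ℝ) ≤ 3)]
  · have := Real.log_le_log hpos hlower
    rw [Real.log_div (Real.exp_pos t).ne' (by norm_num), Real.log_exp] at this
    linarith

lemma abs_log_weighted_exp_sub_log_cosh_le {u v : ℝ} (hu : 0 ≤ u) (hv : 0 ≤ v) :
    |Real.log (a * Real.exp v + a * Real.exp (-u) + b) - Real.log (Real.cosh v)| ≤
      3 * (b * v + |u - v|) := by
  set E := a * Real.exp v + a * Real.exp (-u) + b
  have hcosh_one : 1 ≤ Real.cosh v := Real.one_le_cosh v
  have hcosh_pos : 0 < Real.cosh v := Real.cosh_pos v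
  have ha_le : a ≤ 1 := by linarith
  have hE_ge : Real.cosh v / 3 ≤ E := by
    nlinarith [cosh_le_exp_of_nonneg hv, Real.exp_pos (-u)]
  have hE_sub :
      E - Real.cosh v = a * (Real.exp (-u) - Real.exp (-v)) - b * (Real.cosh v - 1) := by
    simp only [E, Real.cosh_eq]; linear_combination (Real.exp v + Real.exp (-v)) / 2 * hab
  have hdiff : |E - Real.cosh v| ≤ (b * v + |u - v|) * Real.cosh v := by
    have hexp_diff := abs_exp_neg_sub_exp_neg_le hu hv
    have hcosh_sub := cosh_sub_one_le_mul_cosh hv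
    rw [hE_sub]
    refine (abs_sub _ _).trans ?_
    rw [abs_mul, abs_mul, abs_of_nonneg (by linarith : 0 ≤ a), abs_of_nonneg hb,
      abs_of_nonneg (by linarith : 0 ≤ Real.cosh v - 1)]
    nlinarith [abs_nonneg (u - v), abs_nonneg (Real.exp (-u) - Real.exp (-v))]
  have hmin : Real.cosh v / 3 ≤ min E (Real.cosh v) := le_min hE_ge (by linarith)
  have hmin_pos : 0 < Real.cosh v / 3 := by positivity
  calc |Real.log E - Real.log (Real.cosh v)| ≤ |E - Real.cosh v| / min E (Real.cosh v) :=
        abs_log_sub_log_le (hmin_pos.trans_le hE_ge) hcosh_pos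
    _ ≤ (b * v + |u - v|) * Real.cosh v / (Real.cosh v / 3) :=
        div_le_div₀ (by positivity) hdiff hmin_pos hmin
    _ = 3 * (b * v + |u - v|) := by field_simp

end WeightedExp

lemma hp_weights {P : ℝ} (hP : 2 ≤ P) :
    1 / 3 ≤ P / (2 * (P + 1)) ∧ 0 ≤ 1 / (P + 1) ∧
      2 * (P / (2 * (P + 1))) + 1 / (P + 1) = 1 :=
  ⟨by rw [le_div_iff₀ (by linarith)]; linarith, by positivity, by field_simp⟩

lemma hp_eq (p : ℕ) (s : ℝ) :
    hp p s = p / (2 * (p + 1)) * Real.exp (s * Real.log p / (p + 1)) +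
      p / (2 * (p + 1)) * Real.exp (-(s * Real.log p / (p - 1))) + 1 / (p + 1) := by
  rw [hp, neg_mul, neg_div]

lemma hp_neg_eq (p : ℕ) (s : ℝ) :
    hp p (-s) = p / (2 * (p + 1)) * Real.exp (s * Real.log p / (p - 1)) +
      p / (2 * (p + 1)) * Real.exp (-(s * Real.log p / (p + 1))) + 1 / (p + 1) := by
  rw [hp, neg_neg, neg_mul, neg_div]
  ring

lemma div_sub_div_add_le {P X : ℝ} (hP : 2 ≤ P) (hX : 0 ≤ X) :
    1 / (P + 1) * (X / (P - 1)) + (X / (P - 1) - X / (P + 1)) ≤ 6 * (X / P ^ 2) := by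
  have hsq : 0 < P ^ 2 - 1 := by nlinarith
  have hlhs :
      1 / (P + 1) * (X / (P - 1)) + (X / (P - 1) - X / (P + 1)) = 3 * X / (P ^ 2 - 1) := by
    field_simp [show P - 1 ≠ 0 by linarith, show P + 1 ≠ 0 by linarith]
    ring
  rw [hlhs, mul_div_assoc', div_le_div_iff₀ hsq (by positivity)]
  nlinarith [mul_nonneg hX (show 0 ≤ P ^ 2 - 2 by nlinarith)]

/-- Lemma 4.2: approximations of `log h_p(±r)` for `r ≥ 4`, according to
whether `p ≤ r^{2/3}` or `p > r^{2/3}`. -/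
theorem statement13 :
    ∃ c₀ : ℝ, 0 < c₀ ∧
      ∀ r : ℝ, 4 ≤ r → ∀ p : ℕ, p.Prime →
        ((p : ℝ) ≤ r ^ ((2 : ℝ) / 3) →
          |Real.log (hp p r) - r * Real.log p / ((p : ℝ) + 1)| ≤ c₀ ∧
          |Real.log (hp p (-r)) - r * Real.log p / ((p : ℝ) - 1)| ≤ c₀) ∧
        (r ^ ((2 : ℝ) / 3) < (p : ℝ) →
          |Real.log (hp p r) - Real.log (Real.cosh (r * Real.log p / ((p : ℝ) + 1)))|
              ≤ c₀ * r * Real.log p / (p : ℝ) ^ 2 ∧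
          |Real.log (hp p (-r)) - Real.log (Real.cosh (r * Real.log p / ((p : ℝ) - 1)))|
              ≤ c₀ * r * Real.log p / (p : ℝ) ^ 2) := by
  refine ⟨18, by norm_num, fun r hr p hp_prime => ?_⟩
  have hP : (2 : ℝ) ≤ p := by exact_mod_cast hp_prime.two_le
  have hX : 0 ≤ r * Real.log p := mul_nonneg (by linarith) (Real.log_nonneg (by linarith))
  obtain ⟨ha, hb, hab⟩ := hp_weights hP
  have ht : 0 ≤ r * Real.log p / (p + 1) := div_nonneg hX (by linarith)
  have ht' : 0 ≤ r * Real.log p / (p - 1) := div_nonneg hX (by linarith)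
  have htt' : r * Real.log p / (p + 1) ≤ r * Real.log p / (p - 1) :=
    div_le_div_of_nonneg_left hX (by linarith) (by linarith)
  have hlog3 : Real.log 3 ≤ 18 := by
    linarith [Real.log_le_sub_one_of_pos (by norm_num : (0 : ℝ) < 3)]
  have herror := div_sub_div_add_le hP hX
  have hrhs : 18 * r * Real.log p / (p : ℝ) ^ 2 = 18 * (r * Real.log p / p ^ 2) := by ring
  refine ⟨fun _ => ⟨?_, ?_⟩, fun _ => ⟨?_, ?_⟩⟩
  · rw [hp_eq]
    exact (abs_log_weighted_exp_sub_le_log_three ha hb hab ht ht').trans hlog3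
  · rw [hp_neg_eq]
    exact (abs_log_weighted_exp_sub_le_log_three ha hb hab ht' ht).trans hlog3
  · rw [hp_eq, hrhs]
    refine (abs_log_weighted_exp_sub_log_cosh_le ha hb hab ht' ht).trans ?_
    rw [abs_of_nonneg (sub_nonneg.2 htt')]
    nlinarith [mul_le_mul_of_nonneg_left htt' hb]
  · rw [hp_neg_eq, hrhs]
    refine (abs_log_weighted_exp_sub_log_cosh_le ha hb hab ht ht').trans ?_
    rw [abs_sub_comm, abs_of_nonneg (sub_nonneg.2 htt')]
    linarith
end

section
/- There is an absolute constant c₀ > 0 such that for every real r ≥ 4 and every prime p: if p ≤ r^{2/3} then |h_p'(r)/h_p(r) − log p/(p+1)| ≤ c₀·(log p/(p+1))·exp(−r^{1/3}) and |h_p'(−r)/h_p(−r) + log p/(p−1)| ≤ c₀·(log p/(p−1))·exp(−r^{1/3}); while if p > r^{2/3} then |h_p'(r)/h_p(r) − (log p/(p+1))·tanh(r·log p/(p+1))| ≤ c₀·((log p)/p² + r·(log p)²/p³) and |h_p'(−r)/h_p(−r) + (log p/(p−1))·tanh(r·log p/(p−1))| ≤ c₀·((log p)/p² + r·(log p)²/p³),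 where h_p' denotes the derivative of h_p. -/
open scoped Classical
open MeasureTheory ProbabilityTheory Complex

/-!
Write `a = p/(2(p+1))`, `c = 1/(p+1)`, `α = log p/(p+1)`, `β = log p/(p-1)`. Then
`h_p(s) = a e^{αs} + a e^{-βs} + c`, and `h_p(-s)` has the same shape with `α` and `β` exchanged,
so everything reduces to the logarithmic derivative `L` of such a function at `r ≥ 0`.

* The term `a e^{αr}` dominates, so `|L(r) - α| ≤ (2α + β) e^{-αr}`. When `p ≤ r^{2/3}` one has
  `αr ≥ r^{1/3} - 3`, which gives the first pair of estimates.
* `α tanh(αr)` is the logarithmic derivative of `a (e^{αs} + e^{-αs})`; replacing `e^{-βr}` by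
  `e^{-αr}` and dropping `c` costs `|β - α| (1 + (α + β) r) + α c / a`. As `β - α = 2 log p/(p² - 1)`,
  `α + β = O(log p / p)` and `c / a = 2 / p`, this is `O(log p / p² + r log² p / p³)`.
-/

noncomputable def expMix (a c α β s : ℝ) : ℝ :=
  a * Real.exp (α * s) + a * Real.exp (-(β * s)) + c

lemma abs_exp_neg_sub_exp_neg_le_s14 {x y : ℝ} (hx : 0 ≤ x) (hy : 0 ≤ y) :
    |Real.exp (-x) - Real.exp (-y)| ≤ |x - y| := by
  wlog hxy : x ≤ y generalizing x y
  · rw [abs_sub_comm, abs_sub_comm x]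
    exact this hy hx (le_of_not_ge hxy)
  have hsplit : Real.exp (-x) - Real.exp (-y) = Real.exp (-x) * (1 - Real.exp (-(y - x))) := by
    rw [mul_sub, ← Real.exp_add]; ring_nf
  have h1 : 1 - (y - x) ≤ Real.exp (-(y - x)) := Real.one_sub_le_exp_neg _
  have h2 : Real.exp (-(y - x)) ≤ 1 := Real.exp_le_one_iff.mpr (by linarith)
  have h3 : Real.exp (-x) ≤ 1 := Real.exp_le_one_iff.mpr (by linarith)
  rw [hsplit, abs_of_nonneg (mul_nonneg (Real.exp_pos _).le (by linarith)),
    abs_of_nonpos (by linarith)]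
  nlinarith [Real.exp_pos (-x)]

lemma hasDerivAt_expMix (a c α β s : ℝ) :
    HasDerivAt (expMix a c α β)
      (a * α * Real.exp (α * s) - a * β * Real.exp (-(β * s))) s := by
  have hA := ((hasDerivAt_id s).const_mul α).exp.const_mul a
  have hB := ((hasDerivAt_id s).const_mul β).neg.exp.const_mul a
  refine ((hA.add hB).add_const c).congr_deriv ?_
  simp only [id, mul_one, Pi.neg_apply]
  ring

lemma expMix_comp_neg (a c α β : ℝ) : expMix a c α β ∘ Neg.neg = expMix a c β α := by
  funext s
  simp only [Function.comp, expMix, mul_neg, neg_neg]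
  ring

lemma logDeriv_expMix_neg (a c α β r : ℝ) :
    logDeriv (expMix a c α β) (-r) = -logDeriv (expMix a c β α) r := by
  rw [← expMix_comp_neg a c α β, logDeriv_comp (hasDerivAt_expMix ..).differentiableAt
    (hasDerivAt_neg r).differentiableAt, deriv_neg'']
  ring

lemma abs_logDeriv_expMix_sub_le {a c α β r : ℝ} (ha : 0 < a) (hc : 0 ≤ c) (hca : c ≤ a)
    (hα : 0 ≤ α) (hβ : 0 ≤ β) (hr : 0 ≤ r) :
    |logDeriv (expMix a c α β) r - α| ≤ (2 * α + β) * Real.exp (-(α * r)) := by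
  rw [logDeriv_apply, (hasDerivAt_expMix a c α β r).deriv]
  simp only [expMix]
  set A := Real.exp (α * r)
  set B := Real.exp (-(β * r))
  set E := Real.exp (-(α * r))
  have hB1 : B ≤ 1 := Real.exp_le_one_iff.mpr (by nlinarith)
  have hAE : A * E = 1 := by rw [← Real.exp_add]; simp
  have hD : 0 < a * A + a * B + c := by positivity
  have herr : (a * α * A - a * β * B) / (a * A + a * B + c) - α
      = -((a * (α + β) * B + α * c) / (a * A + a * B + c)) := by
    rw [div_sub' hD.ne', neg_div']
    congr 1
    ring
  rw [herr, abs_neg, abs_of_nonneg (by positivity), div_le_iff₀ hD]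
  have hnum : a * (α + β) * B + α * c ≤ a * (2 * α + β) := by
    nlinarith [mul_le_mul_of_nonneg_left hB1 (by positivity : 0 ≤ a * (α + β)),
      mul_le_mul_of_nonneg_left hca hα]
  have hrest : 0 ≤ (2 * α + β) * E * (a * B + c) := by positivity
  linear_combination hnum + hrest - a * (2 * α + β) * hAE

lemma tanh_mul_exp_add_exp_neg (x : ℝ) :
    Real.tanh x * (Real.exp x + Real.exp (-x)) = Real.exp x - Real.exp (-x) := by
  have hcosh : Real.exp x + Real.exp (-x) ≠ 0 := by positivity
  rw [Real.tanh_eq_sinh_div_cosh, Real.sinh_eq, Real.cosh_eq]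
  field_simp

lemma abs_logDeriv_expMix_sub_tanh_le {a c α β r : ℝ} (ha : 0 < a) (hc : 0 ≤ c)
    (hα : 0 ≤ α) (hβ : 0 ≤ β) (hr : 0 ≤ r) :
    |logDeriv (expMix a c α β) r - α * Real.tanh (α * r)|
      ≤ |β - α| * (1 + (α + β) * r) + α * c / a := by
  rw [logDeriv_apply, (hasDerivAt_expMix a c α β r).deriv]
  simp only [expMix]
  have hTA := tanh_mul_exp_add_exp_neg (α * r)
  have huv : |Real.exp (-(α * r)) - Real.exp (-(β * r))| ≤ |β - α| * r := by
    calc _ ≤ |α * r - β * r| :=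
          abs_exp_neg_sub_exp_neg_le_s14 (mul_nonneg hα hr) (mul_nonneg hβ hr)
      _ = |β - α| * r := by rw [← sub_mul, abs_mul, abs_sub_comm, abs_of_nonneg hr]
  set A := Real.exp (α * r)
  set u := Real.exp (-(α * r))
  set v := Real.exp (-(β * r))
  set T := Real.tanh (α * r)
  set d := |β - α|
  have hA : 1 ≤ A := Real.one_le_exp (mul_nonneg hα hr)
  have hu : u ≤ 1 := Real.exp_le_one_iff.mpr (by nlinarith)
  have hT : |T| ≤ 1 := (Real.abs_tanh_lt_one _).le
  have hD : a ≤ a * A + a * v + c := by nlinarith [Real.exp_pos (-(β * r))]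
  -- compare with `α tanh(αr) = (aαA - aαu) / (aA + au)`
  have herr : (a * α * A - a * β * v) / (a * A + a * v + c) - α * T
      = (a * (α - β) * u + a * β * (u - v) - α * T * (a * (v - u) + c))
        / (a * A + a * v + c) := by
    rw [div_sub' (by linarith)]
    congr 1
    linear_combination (-(a * α)) * hTA
  have h1 : |a * (α - β) * u| ≤ a * d := by
    rw [abs_mul, abs_mul, abs_of_pos ha, abs_sub_comm, abs_of_pos (Real.exp_pos _)]
    exact mul_le_of_le_one_right (by positivity) hu
  have h2 : |a * β * (u - v)| ≤ a * β * (d * r) := by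
    rw [abs_mul, abs_of_nonneg (by positivity)]
    exact mul_le_mul_of_nonneg_left huv (by positivity)
  have h3 : |α * T * (a * (v - u) + c)| ≤ α * (a * (d * r) + c) := by
    have hvu : |a * (v - u) + c| ≤ a * (d * r) + c := by
      refine (abs_add_le _ _).trans ?_
      rw [abs_mul, abs_of_pos ha, abs_sub_comm, abs_of_nonneg hc]
      gcongr
    rw [abs_mul, abs_mul, abs_of_nonneg hα]
    calc α * |T| * |a * (v - u) + c| ≤ α * 1 * (a * (d * r) + c) := by gcongr
      _ = α * (a * (d * r) + c) := by ring
  rw [herr, abs_div, abs_of_pos (show 0 < a * A + a * v + c by linarith),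
    div_le_iff₀ (by linarith)]
  calc _ ≤ |a * (α - β) * u| + |a * β * (u - v)| + |α * T * (a * (v - u) + c)| :=
        (abs_sub _ _).trans (by gcongr; exact abs_add_le _ _)
    _ ≤ a * d + a * β * (d * r) + α * (a * (d * r) + c) := by gcongr
    _ = (d * (1 + (α + β) * r) + α * c / a) * a := by field_simp; ring
    _ ≤ (d * (1 + (α + β) * r) + α * c / a) * (a * A + a * v + c) := by gcongr

lemma hp_eq_expMix (p : ℕ) :
    hp p = expMix ((p : ℝ) / (2 * ((p : ℝ) + 1))) (1 / ((p : ℝ) + 1))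
      (Real.log p / ((p : ℝ) + 1)) (Real.log p / ((p : ℝ) - 1)) := by
  funext s
  unfold hp expMix
  ring_nf

lemma rpow_one_third_sub_three_le {x r : ℝ} (hx : 2 ≤ x) (hr : 0 ≤ r)
    (hxr : x ≤ r ^ ((2 : ℝ) / 3)) :
    r ^ ((1 : ℝ) / 3) - 3 ≤ Real.log x / (x + 1) * r := by
  set t := r ^ ((1 : ℝ) / 3)
  have ht : 0 ≤ t := Real.rpow_nonneg hr _
  have hrt : r = t ^ 3 := by
    rw [← Real.rpow_natCast, ← Real.rpow_mul hr]; norm_num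
  have hxt : x ≤ t ^ 2 := by
    rwa [← Real.rpow_natCast, ← Real.rpow_mul hr, show (1 : ℝ) / 3 * (2 : ℕ) = 2 / 3 by norm_num]
  have hlog2 : 1 / 2 < Real.log x :=
    (Real.log_two_gt_d9.trans_le' (by norm_num)).trans_le (Real.log_le_log (by norm_num) hx)
  rw [div_mul_eq_mul_div, le_div_iff₀ (by linarith), hrt]
  rcases le_total t 3 with ht3 | ht3
  · nlinarith
  rcases le_total x 3 with hx3 | hx3
  · nlinarith [pow_le_pow_left₀ (by norm_num) ht3 2]
  · have hlog3 : 1 ≤ Real.log x := by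
      rw [Real.le_log_iff_exp_le (by linarith)]
      linarith [Real.exp_one_lt_d9]
    nlinarith [mul_le_mul_of_nonneg_left hxt (by linarith : 0 ≤ t - 3)]

lemma tanh_approx_error_le {x r : ℝ} (hx : 2 ≤ x) (hr : 0 ≤ r) :
    (Real.log x / (x - 1) - Real.log x / (x + 1))
        * (1 + (Real.log x / (x + 1) + Real.log x / (x - 1)) * r)
      + Real.log x / (x - 1) * (1 / (x + 1)) / (x / (2 * (x + 1)))
      ≤ 16 * (Real.log x / x ^ 2 + r * Real.log x ^ 2 / x ^ 3) := by
  set L := Real.log x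
  have hL : 0 < L := Real.log_pos (by linarith)
  have hx1 : 0 < x - 1 := by linarith
  have hsq : 0 ≤ x ^ 2 - 2 := by nlinarith
  have hdiff : L / (x - 1) - L / (x + 1) ≤ 4 * L / x ^ 2 := by
    rw [div_sub_div _ _ hx1.ne' (by linarith), div_le_div_iff₀ (by nlinarith) (by positivity)]
    nlinarith [mul_nonneg hL.le hsq]
  have hsum : L / (x + 1) + L / (x - 1) ≤ 4 * L / x := by
    rw [div_add_div _ _ (by linarith) hx1.ne', div_le_div_iff₀ (by nlinarith) (by positivity)]
    nlinarith [mul_nonneg hL.le hsq]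
  have hatom : L / (x - 1) * (1 / (x + 1)) / (x / (2 * (x + 1))) ≤ 4 * L / x ^ 2 := by
    rw [show L / (x - 1) * (1 / (x + 1)) / (x / (2 * (x + 1))) = 2 * L / (x * (x - 1)) by
      field_simp, div_le_div_iff₀ (by positivity) (by positivity)]
    nlinarith [mul_nonneg (mul_nonneg hL.le (by linarith : 0 ≤ x)) (by linarith : 0 ≤ x - 2)]
  calc _ ≤ 4 * L / x ^ 2 * (1 + 4 * L / x * r) + 4 * L / x ^ 2 := by gcongr
    _ = 8 * (L / x ^ 2) + 16 * (r * L ^ 2 / x ^ 3) := by field_simp; ring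
    _ ≤ 16 * (L / x ^ 2 + r * L ^ 2 / x ^ 3) := by
        have : 0 ≤ L / x ^ 2 := by positivity
        linarith

section hp

variable {p : ℕ} {r : ℝ}

lemma abs_logDeriv_hp_sub_le (hp2 : 2 ≤ p) (hr : 0 ≤ r) (hpr : (p : ℝ) ≤ r ^ ((2 : ℝ) / 3)) :
    |logDeriv (hp p) r - Real.log p / ((p : ℝ) + 1)|
      ≤ 5 * Real.exp 3 * (Real.log p / ((p : ℝ) + 1)) * Real.exp (-r ^ ((1 : ℝ) / 3)) := by
  have hx : (2 : ℝ) ≤ p := by exact_mod_cast hp2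
  have hL : 0 ≤ Real.log p := Real.log_nonneg (by linarith)
  have hβα : Real.log p / ((p : ℝ) - 1) ≤ 3 * (Real.log p / ((p : ℝ) + 1)) := by
    rw [← mul_div_assoc, div_le_div_iff₀ (by linarith) (by linarith)]
    nlinarith [mul_nonneg hL (by linarith : (0 : ℝ) ≤ p - 2)]
  have hca : 1 / ((p : ℝ) + 1) ≤ p / (2 * ((p : ℝ) + 1)) := by
    rw [div_le_div_iff₀ (by linarith) (by linarith)]; nlinarith
  have hdecay : Real.exp (-(Real.log p / ((p : ℝ) + 1) * r))
      ≤ Real.exp 3 * Real.exp (-r ^ ((1 : ℝ) / 3)) := by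
    rw [← Real.exp_add]
    exact Real.exp_le_exp.2 (by linarith [rpow_one_third_sub_three_le hx hr hpr])
  rw [hp_eq_expMix]
  calc _ ≤ _ := abs_logDeriv_expMix_sub_le (by positivity) (by positivity) hca (by positivity)
        (div_nonneg hL (by linarith)) hr
    _ ≤ 5 * (Real.log p / ((p : ℝ) + 1)) * (Real.exp 3 * Real.exp (-r ^ ((1 : ℝ) / 3))) := by
        gcongr; linarith
    _ = _ := by ring

lemma abs_logDeriv_hp_neg_add_le (hp2 : 2 ≤ p) (hr : 0 ≤ r)
    (hpr : (p : ℝ) ≤ r ^ ((2 : ℝ) / 3)) :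
    |logDeriv (hp p) (-r) + Real.log p / ((p : ℝ) - 1)|
      ≤ 5 * Real.exp 3 * (Real.log p / ((p : ℝ) - 1)) * Real.exp (-r ^ ((1 : ℝ) / 3)) := by
  have hx : (2 : ℝ) ≤ p := by exact_mod_cast hp2
  have hL : 0 ≤ Real.log p := Real.log_nonneg (by linarith)
  have hβ : 0 ≤ Real.log p / ((p : ℝ) - 1) := div_nonneg hL (by linarith)
  have hαβ : Real.log p / ((p : ℝ) + 1) ≤ Real.log p / ((p : ℝ) - 1) :=
    div_le_div_of_nonneg_left hL (by linarith) (by linarith)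
  have hca : 1 / ((p : ℝ) + 1) ≤ p / (2 * ((p : ℝ) + 1)) := by
    rw [div_le_div_iff₀ (by linarith) (by linarith)]; nlinarith
  have hdecay : Real.exp (-(Real.log p / ((p : ℝ) - 1) * r))
      ≤ Real.exp 3 * Real.exp (-r ^ ((1 : ℝ) / 3)) := by
    rw [← Real.exp_add]
    refine Real.exp_le_exp.2 ?_
    nlinarith [rpow_one_third_sub_three_le hx hr hpr]
  rw [hp_eq_expMix, logDeriv_expMix_neg, neg_add_eq_sub, abs_sub_comm]
  calc _ ≤ _ := abs_logDeriv_expMix_sub_le (by positivity) (by positivity) hca hβ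
        (by positivity) hr
    _ ≤ 5 * (Real.log p / ((p : ℝ) - 1)) * (Real.exp 3 * Real.exp (-r ^ ((1 : ℝ) / 3))) := by
        gcongr; linarith
    _ = _ := by ring

lemma abs_logDeriv_hp_sub_tanh_le (hp2 : 2 ≤ p) (hr : 0 ≤ r) :
    |logDeriv (hp p) r
        - Real.log p / ((p : ℝ) + 1) * Real.tanh (r * Real.log p / ((p : ℝ) + 1))|
      ≤ 16 * (Real.log p / (p : ℝ) ^ 2 + r * Real.log p ^ 2 / (p : ℝ) ^ 3) := by
  have hx : (2 : ℝ) ≤ p := by exact_mod_cast hp2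
  have hL : 0 ≤ Real.log p := Real.log_nonneg (by linarith)
  have hαβ : Real.log p / ((p : ℝ) + 1) ≤ Real.log p / ((p : ℝ) - 1) :=
    div_le_div_of_nonneg_left hL (by linarith) (by linarith)
  rw [hp_eq_expMix, show r * Real.log p / ((p : ℝ) + 1) = Real.log p / ((p : ℝ) + 1) * r by ring]
  refine (abs_logDeriv_expMix_sub_tanh_le (by positivity) (by positivity) (by positivity)
    (div_nonneg hL (by linarith)) hr).trans ?_
  rw [abs_of_nonneg (sub_nonneg.2 hαβ)]
  refine le_trans ?_ (tanh_approx_error_le hx hr)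
  gcongr

lemma abs_logDeriv_hp_neg_add_tanh_le (hp2 : 2 ≤ p) (hr : 0 ≤ r) :
    |logDeriv (hp p) (-r)
        + Real.log p / ((p : ℝ) - 1) * Real.tanh (r * Real.log p / ((p : ℝ) - 1))|
      ≤ 16 * (Real.log p / (p : ℝ) ^ 2 + r * Real.log p ^ 2 / (p : ℝ) ^ 3) := by
  have hx : (2 : ℝ) ≤ p := by exact_mod_cast hp2
  have hL : 0 ≤ Real.log p := Real.log_nonneg (by linarith)
  have hαβ : Real.log p / ((p : ℝ) + 1) ≤ Real.log p / ((p : ℝ) - 1) :=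
    div_le_div_of_nonneg_left hL (by linarith) (by linarith)
  rw [hp_eq_expMix, logDeriv_expMix_neg, neg_add_eq_sub, abs_sub_comm,
    show r * Real.log p / ((p : ℝ) - 1) = Real.log p / ((p : ℝ) - 1) * r by ring]
  refine (abs_logDeriv_expMix_sub_tanh_le (by positivity) (by positivity)
    (div_nonneg hL (by linarith)) (by positivity) hr).trans ?_
  rw [abs_sub_comm, abs_of_nonneg (sub_nonneg.2 hαβ), add_comm (Real.log p / ((p : ℝ) - 1))]
  exact tanh_approx_error_le hx hr

end hp

/-- Lemma 4.3: approximations of the logarithmic derivative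
`h_p'(±r)/h_p(±r)` for `r ≥ 4`, according to whether `p ≤ r^{2/3}` or `p > r^{2/3}`. -/
theorem statement14 :
    ∃ c₀ : ℝ, 0 < c₀ ∧
      ∀ r : ℝ, 4 ≤ r → ∀ p : ℕ, p.Prime →
        ((p : ℝ) ≤ r ^ ((2 : ℝ) / 3) →
          |deriv (hp p) r / hp p r - Real.log p / ((p : ℝ) + 1)|
              ≤ c₀ * (Real.log p / ((p : ℝ) + 1)) * Real.exp (-r ^ ((1 : ℝ) / 3)) ∧
          |deriv (hp p) (-r) / hp p (-r) + Real.log p / ((p : ℝ) - 1)|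
              ≤ c₀ * (Real.log p / ((p : ℝ) - 1)) * Real.exp (-r ^ ((1 : ℝ) / 3))) ∧
        (r ^ ((2 : ℝ) / 3) < (p : ℝ) →
          |deriv (hp p) r / hp p r
              - Real.log p / ((p : ℝ) + 1) * Real.tanh (r * Real.log p / ((p : ℝ) + 1))|
              ≤ c₀ * (Real.log p / (p : ℝ) ^ 2 + r * Real.log p ^ 2 / (p : ℝ) ^ 3) ∧
          |deriv (hp p) (-r) / hp p (-r)
              + Real.log p / ((p : ℝ) - 1) * Real.tanh (r * Real.log p / ((p : ℝ) - 1))|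
              ≤ c₀ * (Real.log p / (p : ℝ) ^ 2 + r * Real.log p ^ 2 / (p : ℝ) ^ 3)) := by
  refine ⟨5 * Real.exp 3, by positivity, fun r hr p hprime => ?_⟩
  have hp2 := hprime.two_le
  have hr0 : 0 ≤ r := by linarith
  have h16 : 16 ≤ 5 * Real.exp 3 := by linarith [Real.add_one_le_exp 3]
  have herr : 0 ≤ Real.log p / (p : ℝ) ^ 2 + r * Real.log p ^ 2 / (p : ℝ) ^ 3 := by positivity
  simp only [← logDeriv_apply]
  refine ⟨fun hpr => ⟨abs_logDeriv_hp_sub_le hp2 hr0 hpr, abs_logDeriv_hp_neg_add_le hp2 hr0 hpr⟩,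
    fun _ => ⟨?_, ?_⟩⟩
  · exact (abs_logDeriv_hp_sub_tanh_le hp2 hr0).trans (by gcongr)
  · exact (abs_logDeriv_hp_neg_add_tanh_le hp2 hr0).trans (by gcongr)
end
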